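/- Let m ≥ 2, let B be a real m×m matrix with Bᵀ = −B and B² = −I, and for x = (x_h,x_v) ∈ ℝᵐ × ℝ define the (m+1)×m matrix σ(x) with the identity I_m in the first m rows and (Bx_h)ᵀ as last row. Let u(x) = |x_h|⁴ + 4x_v² and U(x) = u(x)^{1/4}. Then for every x ≠ 0 the function U is differentiable at x and |σ(x)ᵀ∇U(x)| = |x_h| / U(x); in particular the Hamiltonian H(x,p) = |σ(x)ᵀp| satisfies H(x,∇U(x)) = |x_h|/U(x), and U(x) ≤ |x|/ε on the set where H(x,∇U(x)) ≥ ε, for every ε > 0. -/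
import Mathlib


open Set
open scoped RealInnerProductSpace

/-- for the Hörmander-type matrix field `σ(x) = [I_m ; (Bx_h)ᵀ]`
(`B` skew-symmetric with `B² = -I`), the gauge function
`U(x) = (|x_h|⁴ + 4 x_v²)^{1/4}` is differentiable away from the origin, with
`|σ(x)ᵀ∇U(x)| = |x_h|/U(x)` (here `σ(x)ᵀ(g_h, g_v) = g_h + g_v B x_h`);
moreover `U(x) ≤ |x|/ε` wherever `H(x,∇U(x)) = |x_h|/U(x) ≥ ε`. -/
theorem stmt_10 {m : ℕ} (hm : 2 ≤ m)
    (B : EuclideanSpace ℝ (Fin m) →L[ℝ] EuclideanSpace ℝ (Fin m))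
    (hskew : ∀ v w : EuclideanSpace ℝ (Fin m), ⟪B v, w⟫ = -⟪v, B w⟫)
    (hB2 : ∀ v, B (B v) = -v)
    (U : EuclideanSpace ℝ (Fin m) × ℝ → ℝ)
    (hU : ∀ x : EuclideanSpace ℝ (Fin m) × ℝ,
      U x = (‖x.1‖ ^ 4 + 4 * x.2 ^ 2) ^ ((1:ℝ)/4)) :
    ∀ x : EuclideanSpace ℝ (Fin m) × ℝ, x ≠ 0 →
      ∃ (gh : EuclideanSpace ℝ (Fin m)) (gv : ℝ)
        (D : EuclideanSpace ℝ (Fin m) × ℝ →L[ℝ] ℝ),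
        HasFDerivAt U D x ∧
        (∀ v : EuclideanSpace ℝ (Fin m) × ℝ, D v = ⟪gh, v.1⟫ + gv * v.2) ∧
        ‖gh + gv • B x.1‖ = ‖x.1‖ / U x ∧
        ∀ ε : ℝ, 0 < ε → ε ≤ ‖x.1‖ / U x →
          U x ≤ Real.sqrt (‖x.1‖ ^ 2 + x.2 ^ 2) / ε := by
  intro x hx
  -- positivity of u(x)
  have hfx : 0 < ‖x.1‖ ^ 4 + 4 * x.2 ^ 2 := by
    have h0 : x.1 ≠ 0 ∨ x.2 ≠ 0 := by
      by_contra h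
      push_neg at h
      exact hx (Prod.ext h.1 h.2)
    rcases h0 with h | h
    · have h1 : 0 < ‖x.1‖ ^ 4 := pow_pos (norm_pos_iff.mpr h) 4
      nlinarith [sq_nonneg x.2]
    · have h1 : 0 < x.2 ^ 2 := by positivity
      nlinarith [pow_nonneg (norm_nonneg x.1) 4]
  have ht : (0:ℝ) < (‖x.1‖ ^ 4 + 4 * x.2 ^ 2) ^ (-(3:ℝ)/4) :=
    Real.rpow_pos_of_pos hfx _
  -- ‖B v‖ = ‖v‖
  have hBnorm : ∀ v : EuclideanSpace ℝ (Fin m), ‖B v‖ = ‖v‖ := by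
    intro v
    have h1 : ⟪B v, B v⟫ = ⟪v, v⟫ := by
      rw [hskew v (B v), hB2, inner_neg_right, neg_neg]
    have h2 : ‖B v‖ ^ 2 = ‖v‖ ^ 2 := by
      rw [← real_inner_self_eq_norm_sq, ← real_inner_self_eq_norm_sq, h1]
    nlinarith [norm_nonneg (B v), norm_nonneg v]
  -- ⟪x.1, B x.1⟫ = 0
  have hortho : ⟪x.1, B x.1⟫ = 0 := by
    have h1 := hskew x.1 x.1
    have h2 : ⟪B x.1, x.1⟫ = ⟪x.1, B x.1⟫ := real_inner_comm _ _
    linarith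
  -- derivative of u
  have hf1 : HasFDerivAt (fun y : EuclideanSpace ℝ (Fin m) × ℝ => ‖y.1‖ ^ 2)
      (2 • ((innerSL ℝ x.1).comp
        (ContinuousLinearMap.fst ℝ (EuclideanSpace ℝ (Fin m)) ℝ))) x :=
    (hasFDerivAt_fst (p := x)).norm_sq
  have hs : HasFDerivAt (fun y : EuclideanSpace ℝ (Fin m) × ℝ => y.2)
      (ContinuousLinearMap.snd ℝ (EuclideanSpace ℝ (Fin m)) ℝ) x :=
    hasFDerivAt_snd
  have key : HasFDerivAt
      (fun y : EuclideanSpace ℝ (Fin m) × ℝ => ‖y.1‖ ^ 4 + 4 * y.2 ^ 2)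
      ((((‖x.1‖ ^ 2) • (2 • ((innerSL ℝ x.1).comp
          (ContinuousLinearMap.fst ℝ (EuclideanSpace ℝ (Fin m)) ℝ)))
        + (‖x.1‖ ^ 2) • (2 • ((innerSL ℝ x.1).comp
          (ContinuousLinearMap.fst ℝ (EuclideanSpace ℝ (Fin m)) ℝ))))
        + (4:ℝ) • (x.2 • ContinuousLinearMap.snd ℝ (EuclideanSpace ℝ (Fin m)) ℝ
          + x.2 • ContinuousLinearMap.snd ℝ (EuclideanSpace ℝ (Fin m)) ℝ)) : _) x := by
    have heq : (fun y : EuclideanSpace ℝ (Fin m) × ℝ => ‖y.1‖ ^ 4 + 4 * y.2 ^ 2)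
        = fun y : EuclideanSpace ℝ (Fin m) × ℝ =>
            (‖y.1‖ ^ 2) * (‖y.1‖ ^ 2) + 4 * (y.2 * y.2) :=
      funext fun y => by ring
    rw [heq]
    exact (hf1.mul hf1).add ((hs.mul hs).const_mul (4:ℝ))
  have hD := key.rpow_const (p := (1:ℝ)/4) (Or.inl hfx.ne')
  have hUeq : U = fun y : EuclideanSpace ℝ (Fin m) × ℝ =>
      (‖y.1‖ ^ 4 + 4 * y.2 ^ 2) ^ ((1:ℝ)/4) := funext hU
  rw [← hUeq] at hD
  refine ⟨((‖x.1‖ ^ 2) * ((‖x.1‖ ^ 4 + 4 * x.2 ^ 2) ^ (-(3:ℝ)/4))) • x.1,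
    2 * x.2 * ((‖x.1‖ ^ 4 + 4 * x.2 ^ 2) ^ (-(3:ℝ)/4)), _, hD, ?_, ?_, ?_⟩
  · -- formula for D v
    intro v
    have hexp : (‖x.1‖ ^ 4 + 4 * x.2 ^ 2) ^ ((1:ℝ)/4 - 1)
        = (‖x.1‖ ^ 4 + 4 * x.2 ^ 2) ^ (-(3:ℝ)/4) := by
      congr 1; norm_num
    simp only [ContinuousLinearMap.smul_apply, ContinuousLinearMap.add_apply,
      ContinuousLinearMap.comp_apply, ContinuousLinearMap.coe_fst',
      ContinuousLinearMap.coe_snd', innerSL_apply_apply, real_inner_smul_left,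
      smul_eq_mul, hexp]
    ring
  · -- norm identity
    have hcollect : ((‖x.1‖ ^ 2) * ((‖x.1‖ ^ 4 + 4 * x.2 ^ 2) ^ (-(3:ℝ)/4))) • x.1
        + (2 * x.2 * ((‖x.1‖ ^ 4 + 4 * x.2 ^ 2) ^ (-(3:ℝ)/4))) • B x.1
        = ((‖x.1‖ ^ 4 + 4 * x.2 ^ 2) ^ (-(3:ℝ)/4)) •
            ((‖x.1‖ ^ 2) • x.1 + (2 * x.2) • B x.1) := by
      rw [smul_add, smul_smul, smul_smul]; ring_nf
    rw [hcollect, norm_smul, Real.norm_eq_abs, abs_of_pos ht]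
    have hinner0 : ⟪(‖x.1‖ ^ 2) • x.1, (2 * x.2) • B x.1⟫ = 0 := by
      rw [real_inner_smul_left, real_inner_smul_right, hortho]; ring
    have hnormsq : ‖(‖x.1‖ ^ 2) • x.1 + (2 * x.2) • B x.1‖ ^ 2
        = ‖x.1‖ ^ 2 * (‖x.1‖ ^ 4 + 4 * x.2 ^ 2) := by
      rw [norm_add_sq_real, hinner0, norm_smul, norm_smul, hBnorm]
      simp only [Real.norm_eq_abs, norm_norm]
      rw [abs_of_nonneg (by positivity : (0:ℝ) ≤ ‖x.1‖ ^ 2)]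
      rw [mul_pow, mul_pow, sq_abs]
      ring
    have hnorm : ‖(‖x.1‖ ^ 2) • x.1 + (2 * x.2) • B x.1‖
        = ‖x.1‖ * (‖x.1‖ ^ 4 + 4 * x.2 ^ 2) ^ ((1:ℝ)/2) := by
      have h1 : ‖(‖x.1‖ ^ 2) • x.1 + (2 * x.2) • B x.1‖
          = Real.sqrt (‖x.1‖ ^ 2 * (‖x.1‖ ^ 4 + 4 * x.2 ^ 2)) := by
        rw [← hnormsq, Real.sqrt_sq (norm_nonneg _)]
      rw [h1, Real.sqrt_mul (by positivity), Real.sqrt_sq (norm_nonneg _),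
        Real.sqrt_eq_rpow]
    rw [hnorm, hU]
    rw [eq_div_iff (Real.rpow_pos_of_pos hfx ((1:ℝ)/4)).ne']
    have hmul : (‖x.1‖ ^ 4 + 4 * x.2 ^ 2) ^ (-(3:ℝ)/4)
        * ((‖x.1‖ ^ 4 + 4 * x.2 ^ 2) ^ ((1:ℝ)/2)
          * (‖x.1‖ ^ 4 + 4 * x.2 ^ 2) ^ ((1:ℝ)/4)) = 1 := by
      rw [← Real.rpow_add hfx, ← Real.rpow_add hfx,
        show (-(3:ℝ)/4 + ((1:ℝ)/2 + (1:ℝ)/4)) = 0 by norm_num, Real.rpow_zero]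
    calc (‖x.1‖ ^ 4 + 4 * x.2 ^ 2) ^ (-(3:ℝ)/4)
          * (‖x.1‖ * (‖x.1‖ ^ 4 + 4 * x.2 ^ 2) ^ ((1:ℝ)/2))
          * (‖x.1‖ ^ 4 + 4 * x.2 ^ 2) ^ ((1:ℝ)/4)
        = ‖x.1‖ * ((‖x.1‖ ^ 4 + 4 * x.2 ^ 2) ^ (-(3:ℝ)/4)
            * ((‖x.1‖ ^ 4 + 4 * x.2 ^ 2) ^ ((1:ℝ)/2)
              * (‖x.1‖ ^ 4 + 4 * x.2 ^ 2) ^ ((1:ℝ)/4))) := by ring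
      _ = ‖x.1‖ := by rw [hmul, mul_one]
  · -- final inequality
    intro ε hε hεle
    have hUx : 0 < U x := by
      rw [hU]; exact Real.rpow_pos_of_pos hfx _
    have h1 : ε * U x ≤ ‖x.1‖ := by
      rw [le_div_iff₀ hUx] at hεle; linarith
    have h2 : ‖x.1‖ ≤ Real.sqrt (‖x.1‖ ^ 2 + x.2 ^ 2) := by
      have hle : ‖x.1‖ ^ 2 ≤ ‖x.1‖ ^ 2 + x.2 ^ 2 := by nlinarith [sq_nonneg x.2]
      calc ‖x.1‖ = Real.sqrt (‖x.1‖ ^ 2) := (Real.sqrt_sq (norm_nonneg _)).symm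
        _ ≤ _ := Real.sqrt_le_sqrt hle
    rw [le_div_iff₀ hε]
    calc U x * ε = ε * U x := by ring
      _ ≤ ‖x.1‖ := h1
      _ ≤ _ := h2
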